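/- The T-count is an invariant of the Clifford double coset of a canonical circuit: if c1 and c2 are canonical words over {TH, SH} and there exist Clifford elements g1, g2 such that the evaluation of c2 equals g1 · (evaluation of c1) · g2 up to phase, then the T-count of c1 equals the T-count of c2. -/

import Mathlib

open Matrix Complex

noncomputable section

/-- The Hadamard gate. -/
noncomputable def Hm : Matrix (Fin 2) (Fin 2) ℂ :=
  (Complex.I / (Real.sqrt 2 : ℂ)) • !![1, 1; 1, -1]

/-- The T gate. -/
noncomputable def Tm : Matrix (Fin 2) (Fin 2) ℂ :=
  !![Complex.exp (-(Real.pi / 8 : ℂ) * Complex.I), 0;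
     0, Complex.exp ((Real.pi / 8 : ℂ) * Complex.I)]

/-- The phase gate `S = T²`. -/
noncomputable def Sm : Matrix (Fin 2) (Fin 2) ℂ := Tm * Tm

/-- `A` equals `B` up to a unit-modulus scalar (global phase). -/
def UpToPhase (A B : Matrix (Fin 2) (Fin 2) ℂ) : Prop :=
  ∃ z : ℂ, ‖z‖ = 1 ∧ A = z • B

/-- Evaluation of a word over the alphabet {H, S}. -/
noncomputable def evalHS (w : List Bool) : Matrix (Fin 2) (Fin 2) ℂ :=
  (w.map (fun b => if b then Hm else Sm)).prod

/-- The Clifford group 𝒞: unitaries equal up to phase to a product of copies of H and S. -/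
def Clifford (U : Matrix (Fin 2) (Fin 2) ℂ) : Prop :=
  U ∈ Matrix.unitaryGroup (Fin 2) ℂ ∧ ∃ w : List Bool, UpToPhase U (evalHS w)

/-- The syllables TH and SH. -/
inductive Syl : Type
  | TH : Syl
  | SH : Syl
deriving DecidableEq

/-- Evaluation of a syllable. -/
noncomputable def evalSyl : Syl → Matrix (Fin 2) (Fin 2) ℂ
  | Syl.TH => Tm * Hm
  | Syl.SH => Sm * Hm

/-- Evaluation of a word over {TH, SH}. -/
noncomputable def evalWord (w : List Syl) : Matrix (Fin 2) (Fin 2) ℂ :=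
  (w.map evalSyl).prod

/-- A word is normalized if it is empty, or it ends with TH and
contains no two consecutive SH syllables. -/
def Normalized (w : List Syl) : Prop :=
  w = [] ∨ (w.getLast? = some Syl.TH ∧ ¬ ([Syl.SH, Syl.SH] <:+: w))

/-- A canonical word: normalized and no SH among its first four syllables. -/
def Canonical (w : List Syl) : Prop :=
  Normalized w ∧ Syl.SH ∉ w.take 4

/-- The T-count of a word: the number of TH syllables. -/
def Tcount (w : List Syl) : ℕ := w.count Syl.TH

/-- Trace distance between two matrices. -/
noncomputable def udist (U V : Matrix (Fin 2) (Fin 2) ℂ) : ℝ :=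
  Real.sqrt ((2 - ‖(U * Vᴴ).trace‖) / 2)

/-! ### Auxiliary machinery: the adjoint (Pauli) representation -/

/-- The Pauli basis. -/
def Pb : Fin 4 → Matrix (Fin 2) (Fin 2) ℂ :=
  ![1, !![0,1;1,0], !![0,-Complex.I;Complex.I,0], !![1,0;0,-1]]

/-- The (extended) adjoint representation. -/
def rho (U : Matrix (Fin 2) (Fin 2) ℂ) : Matrix (Fin 4) (Fin 4) ℂ :=
  Matrix.of fun j k => (Pb j * U * Pb k * Uᴴ).trace / 2

theorem pb_compl (A B : Matrix (Fin 2) (Fin 2) ℂ) :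
    ∑ k : Fin 4, (Pb k * A).trace * (Pb k * B).trace = 2 * (A * B).trace := by
  simp [Pb, Matrix.trace, Matrix.diag, Matrix.mul_apply, Fin.sum_univ_succ]
  ring_nf
  simp [Complex.I_sq]
  ring

theorem rho_mul (U V : Matrix (Fin 2) (Fin 2) ℂ) : rho (U * V) = rho U * rho V := by
  ext j l
  rw [Matrix.mul_apply]
  have h1 : ∀ k : Fin 4, rho U j k * rho V k l
      = (Pb k * (Uᴴ * Pb j * U)).trace * (Pb k * (V * Pb l * Vᴴ)).trace / 4 := by
    intro k
    have e1 : (Pb j * U * Pb k * Uᴴ).trace = (Pb k * (Uᴴ * Pb j * U)).trace := by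
      rw [Matrix.mul_assoc (Pb j * U) (Pb k) Uᴴ, Matrix.trace_mul_comm,
        Matrix.mul_assoc (Pb k) Uᴴ (Pb j * U), ← Matrix.mul_assoc Uᴴ (Pb j) U]
    have e2 : (Pb k * V * Pb l * Vᴴ).trace = (Pb k * (V * Pb l * Vᴴ)).trace := by
      simp only [Matrix.mul_assoc]
    simp only [rho, Matrix.of_apply, e1, e2]
    ring
  rw [Finset.sum_congr rfl (fun k _ => h1 k), ← Finset.sum_div, pb_compl]
  have e3 : (Uᴴ * Pb j * U * (V * Pb l * Vᴴ)).trace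
      = (Pb j * (U * V) * Pb l * (U * V)ᴴ).trace := by
    rw [show Uᴴ * Pb j * U * (V * Pb l * Vᴴ) = Uᴴ * (Pb j * U * (V * Pb l * Vᴴ)) by
        simp only [Matrix.mul_assoc], Matrix.trace_mul_comm, Matrix.conjTranspose_mul]
    simp only [Matrix.mul_assoc]
  rw [e3, rho, Matrix.of_apply]
  ring

theorem rho_smul (z : ℂ) (U : Matrix (Fin 2) (Fin 2) ℂ) :
    rho (z • U) = (z * star z) • rho U := by
  ext j k; simp [rho, Matrix.smul_apply]; ring

theorem rho_one : rho 1 = 1 := by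
  ext j k
  fin_cases j <;> fin_cases k <;>
    simp [rho, Pb, Matrix.trace, Matrix.diag, Matrix.mul_apply, Fin.sum_univ_succ,
      Matrix.one_apply]

/-! ### Explicit values of rho on the gates -/

def c2 : ℂ := ((Real.sqrt 2 / 2 : ℝ) : ℂ)

theorem c2_sq : c2 * c2 = 1/2 := by
  rw [c2]
  norm_cast
  rw [div_mul_div_comm, Real.mul_self_sqrt (by norm_num : (0:ℝ) ≤ 2)]
  norm_num

theorem sqrt2_sq : ((Real.sqrt 2 : ℝ) : ℂ) * ((Real.sqrt 2 : ℝ) : ℂ) = 2 := by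
  norm_cast
  rw [Real.mul_self_sqrt (by norm_num : (0:ℝ) ≤ 2)]

theorem sqrt2_mul_c2 : ((Real.sqrt 2 : ℝ) : ℂ) * c2 = 1 := by
  rw [c2]
  norm_cast
  rw [mul_div_assoc', Real.mul_self_sqrt (by norm_num : (0:ℝ) ≤ 2)]
  norm_num

def rhoH : Matrix (Fin 4) (Fin 4) ℂ := !![1,0,0,0; 0,0,0,1; 0,0,-1,0; 0,1,0,0]
def rhoT : Matrix (Fin 4) (Fin 4) ℂ := !![1,0,0,0; 0,c2,-c2,0; 0,c2,c2,0; 0,0,0,1]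
def rhoS : Matrix (Fin 4) (Fin 4) ℂ := !![1,0,0,0; 0,0,-1,0; 0,1,0,0; 0,0,0,1]

theorem rho_H : rho Hm = rhoH := by
  have hsc : (Complex.I / (Real.sqrt 2 : ℂ)) * star (Complex.I / (Real.sqrt 2 : ℂ)) = 1/2 := by
    simp [Complex.star_def, div_mul_div_comm, sqrt2_sq, Complex.I_mul_I]
  have h2 : rho Hm = (1/2 : ℂ) • rho !![1, 1; 1, -1] := by
    rw [Hm, rho_smul, hsc]
  rw [h2]
  ext j k
  fin_cases j <;> fin_cases k <;>
    · simp [rho, rhoH, Pb, Matrix.trace, Matrix.diag, Matrix.mul_apply, Fin.sum_univ_succ,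
        Matrix.conjTranspose_apply, Matrix.smul_apply, Complex.star_def,
        Matrix.vecHead, Matrix.vecTail]
      try norm_num [Complex.I_sq]
      try ring_nf
      try simp [Complex.I_sq]
      try norm_num

theorem star_texp : star (Complex.exp (-(Real.pi / 8 : ℂ) * Complex.I))
    = Complex.exp ((Real.pi / 8 : ℂ) * Complex.I) := by
  rw [Complex.star_def, ← Complex.exp_conj]
  congr 1
  simp [_root_.map_mul, Complex.conj_I, map_div₀, Complex.conj_ofReal, map_ofNat]

theorem texp_mul : Complex.exp (-(Real.pi / 8 : ℂ) * Complex.I)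
    * Complex.exp ((Real.pi / 8 : ℂ) * Complex.I) = 1 := by
  rw [← Complex.exp_add]; norm_num

theorem texp_sq : Complex.exp ((Real.pi / 8 : ℂ) * Complex.I)
    * Complex.exp ((Real.pi / 8 : ℂ) * Complex.I) = c2 + c2 * Complex.I := by
  rw [← Complex.exp_add]
  have h : (Real.pi / 8 : ℂ) * Complex.I + (Real.pi / 8 : ℂ) * Complex.I
      = ((Real.pi/4 : ℝ) : ℂ) * Complex.I := by push_cast; ring
  rw [h, Complex.exp_mul_I, ← Complex.ofReal_cos, ← Complex.ofReal_sin,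
    Real.cos_pi_div_four, Real.sin_pi_div_four]
  push_cast [c2]
  ring

theorem Tm_eq : Tm = Complex.exp (-(Real.pi / 8 : ℂ) * Complex.I)
    • !![1, 0; 0, c2 + c2 * Complex.I] := by
  rw [← texp_sq]
  ext i j
  fin_cases i <;> fin_cases j <;>
    simp [Tm, Matrix.smul_apply]
  rw [← Complex.exp_add, ← Complex.exp_add]
  congr 1
  ring

theorem rho_T : rho Tm = rhoT := by
  have h1 : Complex.exp (-(Real.pi / 8 : ℂ) * Complex.I)
      * star (Complex.exp (-(Real.pi / 8 : ℂ) * Complex.I)) = 1 := by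
    rw [star_texp, texp_mul]
  rw [Tm_eq, rho_smul, h1, one_smul]
  ext j k
  fin_cases j <;> fin_cases k <;>
    · simp [rho, rhoT, Pb, Matrix.trace, Matrix.diag, Matrix.mul_apply, Fin.sum_univ_succ,
        Matrix.conjTranspose_apply, Matrix.vecHead, Matrix.vecTail, Complex.star_def, map_add,
        _root_.map_mul, Complex.conj_I, Complex.conj_ofReal, map_ofNat, c2]
      try ring_nf
      try simp only [show (Complex.I)^3 = -Complex.I from by simp [pow_succ, Complex.I_sq]]
      try ring_nf
      try norm_num [← Complex.ofReal_pow, Real.sq_sqrt]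
      try ring

theorem rho_S : rho Sm = rhoS := by
  rw [Sm, rho_mul, rho_T]
  ext j k
  fin_cases j <;> fin_cases k <;>
    · simp [rhoT, rhoS, Matrix.mul_apply, Fin.sum_univ_succ, Matrix.vecHead, Matrix.vecTail]
      try norm_num [c2_sq]
      try ring_nf
      try norm_num [c2_sq]


/-! ### The ring ℤ√2 and reductions -/

abbrev R2 := Zsqrtd 2

def phic : R2 →+* ℂ :=
  Complex.ofRealHom.comp (Zsqrtd.toReal (by norm_num : (0:ℤ) ≤ 2))

theorem two_not_square : ∀ n : ℤ, (2:ℤ) ≠ n * n := by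
  intro n h
  rcases le_or_gt n (-2) with h1 | h1
  · nlinarith
  rcases le_or_gt 2 n with h2 | h2
  · nlinarith
  interval_cases n <;> norm_num at h

theorem phic_inj : Function.Injective phic :=
  Complex.ofReal_injective.comp (Zsqrtd.toReal_injective _ two_not_square)

theorem phic_apply (x : R2) :
    phic x = ((x.re : ℝ) : ℂ) + ((x.im : ℝ) : ℂ) * ((Real.sqrt 2 : ℝ) : ℂ) := by
  simp [phic, Zsqrtd.toReal_apply]

theorem phic_sqrtd : phic Zsqrtd.sqrtd = ((Real.sqrt 2 : ℝ) : ℂ) := by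
  rw [phic_apply]
  simp [Zsqrtd.sqrtd]

def pi2 : R2 →+* ZMod 2 where
  toFun x := (x.re : ZMod 2)
  map_one' := by simp
  map_zero' := by simp
  map_mul' x y := by
    push_cast [Zsqrtd.re_mul]
    rw [show (2 : ZMod 2) = 0 by decide]
    ring
  map_add' x y := by
    push_cast [Zsqrtd.re_add]
    ring

theorem pi2_sqrtd : pi2 Zsqrtd.sqrtd = 0 := by
  show ((Zsqrtd.sqrtd (d := 2)).re : ZMod 2) = 0
  simp [Zsqrtd.sqrtd]


/-! ### Integer matrices over ℤ√2 -/

def phim (X : Matrix (Fin 4) (Fin 4) R2) : Matrix (Fin 4) (Fin 4) ℂ := X.map phic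

theorem phim_mul (X Y : Matrix (Fin 4) (Fin 4) R2) : phim (X * Y) = phim X * phim Y := by
  simp [phim, Matrix.map_mul]

theorem phim_one : phim 1 = 1 := by simp [phim]

def THz : Matrix (Fin 4) (Fin 4) R2 :=
  !![Zsqrtd.sqrtd,0,0,0; 0,0,1,1; 0,0,-1,1; 0,Zsqrtd.sqrtd,0,0]
def SHz : Matrix (Fin 4) (Fin 4) R2 := !![1,0,0,0; 0,0,1,0; 0,0,0,1; 0,1,0,0]
def Hz4 : Matrix (Fin 4) (Fin 4) R2 := !![1,0,0,0; 0,0,0,1; 0,0,-1,0; 0,1,0,0]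
def Sz4 : Matrix (Fin 4) (Fin 4) R2 := !![1,0,0,0; 0,0,-1,0; 0,1,0,0; 0,0,0,1]
def Sz4i : Matrix (Fin 4) (Fin 4) R2 := !![1,0,0,0; 0,0,1,0; 0,-1,0,0; 0,0,0,1]

theorem phim_THz : phim THz = ((Real.sqrt 2 : ℝ) : ℂ) • (rhoT * rhoH) := by
  ext i j
  fin_cases i <;> fin_cases j <;>
    · simp [phim, Matrix.map_apply, THz, rhoT, rhoH, Matrix.mul_apply, Fin.sum_univ_succ,
        Matrix.smul_apply, phic_sqrtd, _root_.map_one, _root_.map_zero, _root_.map_neg, Matrix.vecHead,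
        Matrix.vecTail, mul_neg, neg_mul, sqrt2_mul_c2]

theorem phim_SHz : phim SHz = rhoS * rhoH := by
  ext i j
  fin_cases i <;> fin_cases j <;>
    · simp [phim, Matrix.map_apply, SHz, rhoS, rhoH, Matrix.mul_apply, Fin.sum_univ_succ,
        Matrix.vecHead, Matrix.vecTail]

theorem phim_Hz4 : phim Hz4 = rhoH := by
  ext i j
  fin_cases i <;> fin_cases j <;>
    · simp [phim, Matrix.map_apply, Hz4, rhoH, Matrix.vecHead, Matrix.vecTail]

theorem phim_Sz4 : phim Sz4 = rhoS := by
  ext i j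
  fin_cases i <;> fin_cases j <;>
    · simp [phim, Matrix.map_apply, Sz4, rhoS, Matrix.vecHead, Matrix.vecTail]

theorem Hz4_mul_Hz4 : Hz4 * Hz4 = 1 := by
  apply Matrix.ext
  intro i j
  fin_cases i <;> fin_cases j <;>
    simp [Hz4, Matrix.mul_apply, Fin.sum_univ_succ, Matrix.one_apply,
      Matrix.vecHead, Matrix.vecTail]

theorem Sz4_mul_Sz4i : Sz4 * Sz4i = 1 := by
  apply Matrix.ext
  intro i j
  fin_cases i <;> fin_cases j <;>
    simp [Sz4, Sz4i, Matrix.mul_apply, Fin.sum_univ_succ, Matrix.one_apply,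
      Matrix.vecHead, Matrix.vecTail]

theorem Sz4i_mul_Sz4 : Sz4i * Sz4 = 1 := by
  apply Matrix.ext
  intro i j
  fin_cases i <;> fin_cases j <;>
    simp [Sz4, Sz4i, Matrix.mul_apply, Fin.sum_univ_succ, Matrix.one_apply,
      Matrix.vecHead, Matrix.vecTail]


/-! ### The word matrices and the key scaling identity -/

def Mz : List Syl → Matrix (Fin 4) (Fin 4) R2
  | [] => 1
  | Syl.TH :: w => THz * Mz w
  | Syl.SH :: w => SHz * Mz w

theorem evalWord_cons (s : Syl) (w : List Syl) :
    evalWord (s :: w) = evalSyl s * evalWord w := by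
  simp [evalWord]

theorem key (w : List Syl) :
    (((Real.sqrt 2 : ℝ) : ℂ)) ^ (Tcount w) • rho (evalWord w) = phim (Mz w) := by
  induction w with
  | nil => simp [Tcount, evalWord, rho_one, phim_one, Mz]
  | cons s w ih =>
    cases s with
    | TH =>
      have hc : Tcount (Syl.TH :: w) = Tcount w + 1 := by
        simp [Tcount, List.count_cons]
      rw [hc, evalWord_cons, show Mz (Syl.TH :: w) = THz * Mz w from rfl, phim_mul,
        ← ih, phim_THz, show evalSyl Syl.TH = Tm * Hm from rfl, rho_mul, rho_mul, rho_T, rho_H,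
        smul_mul_smul]
      rw [pow_succ]
      congr 1
      ring
    | SH =>
      have hc : Tcount (Syl.SH :: w) = Tcount w := by
        simp [Tcount, List.count_cons]
      rw [hc, evalWord_cons, show Mz (Syl.SH :: w) = SHz * Mz w from rfl, phim_mul,
        ← ih, phim_SHz, show evalSyl Syl.SH = Sm * Hm from rfl, rho_mul, rho_mul, rho_S, rho_H,
        mul_smul_comm]

/-! ### Clifford elements have invertible integral images -/

theorem rho_evalHS (w : List Bool) :
    ∃ N Ni : Matrix (Fin 4) (Fin 4) R2,
      phim N = rho (evalHS w) ∧ N * Ni = 1 ∧ Ni * N = 1 := by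
  induction w with
  | nil =>
    exact ⟨1, 1, by simp [evalHS, rho_one, phim_one], by simp, by simp⟩
  | cons b w ih =>
    obtain ⟨N, Ni, h1, h2, h3⟩ := ih
    have hcons : evalHS (b :: w) = (if b then Hm else Sm) * evalHS w := by
      simp [evalHS]
    cases b with
    | true =>
      refine ⟨Hz4 * N, Ni * Hz4, ?_, ?_, ?_⟩
      · rw [phim_mul, phim_Hz4, hcons, if_pos rfl, rho_mul, rho_H, h1]
      · rw [Matrix.mul_assoc, ← Matrix.mul_assoc N Ni Hz4, h2, Matrix.one_mul, Hz4_mul_Hz4]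
      · rw [Matrix.mul_assoc, ← Matrix.mul_assoc Hz4 Hz4 N, Hz4_mul_Hz4, Matrix.one_mul, h3]
    | false =>
      refine ⟨Sz4 * N, Ni * Sz4i, ?_, ?_, ?_⟩
      · rw [phim_mul, phim_Sz4, hcons, if_neg (by simp), rho_mul, rho_S, h1]
      · rw [Matrix.mul_assoc, ← Matrix.mul_assoc N Ni Sz4i, h2, Matrix.one_mul, Sz4_mul_Sz4i]
      · rw [Matrix.mul_assoc, ← Matrix.mul_assoc Sz4i Sz4 N, Sz4i_mul_Sz4, Matrix.one_mul, h3]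

theorem mul_star_of_abs {z : ℂ} (hz : ‖z‖ = 1) : z * star z = 1 := by
  rw [Complex.star_def, Complex.mul_conj, Complex.normSq_eq_norm_sq, hz]
  norm_num

theorem rho_clifford {g : Matrix (Fin 2) (Fin 2) ℂ} (hg : Clifford g) :
    ∃ N Ni : Matrix (Fin 4) (Fin 4) R2,
      phim N = rho g ∧ N * Ni = 1 ∧ Ni * N = 1 := by
  obtain ⟨-, w, z, hz, hE⟩ := hg
  have hro : rho g = rho (evalHS w) := by
    rw [hE, rho_smul, mul_star_of_abs hz, one_smul]
  rw [hro]
  exact rho_evalHS w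

/-! ### Reduction modulo √2 and the automaton argument -/

def pim (X : Matrix (Fin 4) (Fin 4) R2) : Matrix (Fin 4) (Fin 4) (ZMod 2) := X.map pi2

theorem pim_mul (X Y : Matrix (Fin 4) (Fin 4) R2) : pim (X * Y) = pim X * pim Y := by
  simp [pim, Matrix.map_mul]

theorem pim_one : pim 1 = 1 := by simp [pim]

def Am : Matrix (Fin 4) (Fin 4) (ZMod 2) := !![0,0,0,0; 0,0,1,1; 0,0,1,1; 0,0,0,0]
def Bm : Matrix (Fin 4) (Fin 4) (ZMod 2) := !![1,0,0,0; 0,0,1,0; 0,0,0,1; 0,1,0,0]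

theorem pim_THz : pim THz = Am := by
  apply Matrix.ext
  intro i j
  fin_cases i <;> fin_cases j <;>
    · simp [pim, Matrix.map_apply, THz, Am, pi2_sqrtd, _root_.map_one, _root_.map_zero,
        _root_.map_neg, Matrix.vecHead, Matrix.vecTail]
      try decide

theorem pim_SHz : pim SHz = Bm := by
  apply Matrix.ext
  intro i j
  fin_cases i <;> fin_cases j <;>
    · simp [pim, Matrix.map_apply, SHz, Bm, _root_.map_one, _root_.map_zero,
        Matrix.vecHead, Matrix.vecTail]

theorem Am_mul_Am : Am * Am = Am := by decide
theorem Am_mul_BmAm : Am * (Bm * Am) = Am := by decide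
theorem Am_ne : Am ≠ 0 := by decide
theorem BmAm_ne : Bm * Am ≠ 0 := by decide
theorem one4_ne : (1 : Matrix (Fin 4) (Fin 4) (ZMod 2)) ≠ 0 := by decide

theorem normalized_tail {s : Syl} {w : List Syl} (h : Normalized (s :: w)) : Normalized w := by
  rcases h with h | ⟨h1, h2⟩
  · simp at h
  cases w with
  | nil => exact Or.inl rfl
  | cons b t =>
    refine Or.inr ⟨?_, ?_⟩
    · rw [List.getLast?_cons_cons] at h1
      exact h1
    · intro hinf
      exact h2 (List.infix_cons hinf)

theorem normalized_single {s : Syl} (h : Normalized [s]) : s = Syl.TH := by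
  rcases h with h | ⟨h1, h2⟩
  · simp at h
  simpa using h1

theorem normalized_no_SS {w : List Syl} (h : Normalized (Syl.SH :: Syl.SH :: w)) : False := by
  rcases h with h | ⟨h1, h2⟩
  · simp at h
  exact h2 (List.IsPrefix.isInfix ⟨w, rfl⟩)

theorem pim_Mz (w : List Syl) (h : Normalized w) :
    (w = [] ∧ pim (Mz w) = 1) ∨ (∃ t, w = Syl.TH :: t ∧ pim (Mz w) = Am)
      ∨ (∃ t, w = Syl.SH :: t ∧ pim (Mz w) = Bm * Am) := by
  induction w with
  | nil => exact Or.inl ⟨rfl, pim_one⟩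
  | cons s w ih =>
    have hw := normalized_tail h
    rcases ih hw with ⟨rfl, hm⟩ | ⟨t, rfl, hm⟩ | ⟨t, rfl, hm⟩
    · have hs := normalized_single h
      subst hs
      refine Or.inr (Or.inl ⟨[], rfl, ?_⟩)
      rw [show Mz [Syl.TH] = THz * Mz [] from rfl, pim_mul, hm, pim_THz, mul_one]
    · cases s with
      | TH =>
        refine Or.inr (Or.inl ⟨_, rfl, ?_⟩)
        rw [show Mz (Syl.TH :: Syl.TH :: t) = THz * Mz (Syl.TH :: t) from rfl, pim_mul, hm,
          pim_THz, Am_mul_Am]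
      | SH =>
        refine Or.inr (Or.inr ⟨_, rfl, ?_⟩)
        rw [show Mz (Syl.SH :: Syl.TH :: t) = SHz * Mz (Syl.TH :: t) from rfl, pim_mul, hm,
          pim_SHz]
    · cases s with
      | TH =>
        refine Or.inr (Or.inl ⟨_, rfl, ?_⟩)
        rw [show Mz (Syl.TH :: Syl.SH :: t) = THz * Mz (Syl.SH :: t) from rfl, pim_mul, hm,
          pim_THz, Am_mul_BmAm]
      | SH => exact absurd h (fun hh => normalized_no_SS hh)

theorem pim_Mz_ne (w : List Syl) (h : Normalized w) : pim (Mz w) ≠ 0 := by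
  rcases pim_Mz w h with ⟨-, hm⟩ | ⟨t, -, hm⟩ | ⟨t, -, hm⟩ <;> rw [hm]
  · exact one4_ne
  · exact Am_ne
  · exact BmAm_ne

/-! ### Remaining glue lemmas -/

theorem phim_smul (c : R2) (X : Matrix (Fin 4) (Fin 4) R2) :
    phim (c • X) = phic c • phim X := by
  apply Matrix.ext
  intro i j
  simp [phim, Matrix.map_apply, Matrix.smul_apply, smul_eq_mul, _root_.map_mul]

theorem phim_inj : Function.Injective phim := by
  intro X Y h
  apply Matrix.ext
  intro i j
  apply phic_inj
  have := congrFun (congrFun h i) j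
  simpa [phim, Matrix.map_apply] using this

theorem pim_smul_sqrtd {k : ℕ} (hk : k ≠ 0) (X : Matrix (Fin 4) (Fin 4) R2) :
    pim ((Zsqrtd.sqrtd : R2) ^ k • X) = 0 := by
  apply Matrix.ext
  intro i j
  simp [pim, Matrix.map_apply, Matrix.smul_apply, smul_eq_mul, _root_.map_mul, map_pow,
    pi2_sqrtd, zero_pow hk]

theorem smul_cancel {a : ℂ} (ha : a ≠ 0) {X Y : Matrix (Fin 4) (Fin 4) ℂ}
    (h : a • X = a • Y) : X = Y := by
  apply Matrix.ext
  intro i j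
  have := congrFun (congrFun h i) j
  simp only [Matrix.smul_apply, smul_eq_mul] at this
  exact mul_left_cancel₀ ha this

theorem sqrt2C_ne : (((Real.sqrt 2 : ℝ)) : ℂ) ≠ 0 :=
  Complex.ofReal_ne_zero.mpr (ne_of_gt (Real.sqrt_pos.mpr (by norm_num)))

/-! ### Main theorem -/

theorem tcount_coset_invariant
    (c1 c2 : List Syl) (hc1 : Canonical c1) (hc2 : Canonical c2)
    (h : ∃ g1 g2 : Matrix (Fin 2) (Fin 2) ℂ, Clifford g1 ∧ Clifford g2 ∧
      UpToPhase (evalWord c2) (g1 * evalWord c1 * g2)) :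
    Tcount c1 = Tcount c2 := by
  obtain ⟨g1, g2, hg1, hg2, z, hz, hE⟩ := h
  obtain ⟨N1, N1i, hN1, h11, h12⟩ := rho_clifford hg1
  obtain ⟨N2, N2i, hN2, h21, h22⟩ := rho_clifford hg2
  have E0 : rho (evalWord c2) = rho g1 * (rho (evalWord c1) * rho g2) := by
    rw [hE, rho_smul, mul_star_of_abs hz, one_smul, rho_mul, rho_mul, Matrix.mul_assoc]
  have E1 : ((((Real.sqrt 2 : ℝ) : ℂ)) ^ Tcount c1) • phim (Mz c2)
      = ((((Real.sqrt 2 : ℝ) : ℂ)) ^ Tcount c2) • phim (N1 * (Mz c1 * N2)) := by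
    rw [phim_mul, phim_mul, hN1, hN2, ← key c1, ← key c2, E0]
    rw [smul_mul_assoc, mul_smul_comm]
    rw [smul_smul, smul_smul]
    congr 1
    ring
  by_contra hne
  rcases le_total (Tcount c1) (Tcount c2) with hle | hle
  · -- Tcount c1 < Tcount c2
    set k := Tcount c2 - Tcount c1 with hk
    have hk0 : k ≠ 0 := by omega
    have E3 : phim (Mz c2) = phim ((Zsqrtd.sqrtd : R2) ^ k • (N1 * (Mz c1 * N2))) := by
      apply smul_cancel (pow_ne_zero (Tcount c1) sqrt2C_ne)
      rw [E1, phim_smul, map_pow, phic_sqrtd, smul_smul, ← pow_add]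
      congr 2
      omega
    have E4 := phim_inj E3
    have : pim (Mz c2) = 0 := by
      rw [E4, pim_smul_sqrtd hk0]
    exact pim_Mz_ne c2 hc2.1 this
  · -- Tcount c2 < Tcount c1
    set k := Tcount c1 - Tcount c2 with hk
    have hk0 : k ≠ 0 := by omega
    have E3 : phim ((Zsqrtd.sqrtd : R2) ^ k • Mz c2) = phim (N1 * (Mz c1 * N2)) := by
      apply smul_cancel (pow_ne_zero (Tcount c2) sqrt2C_ne)
      rw [← E1, phim_smul, map_pow, phic_sqrtd, smul_smul, ← pow_add]
      congr 2
      omega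
    have E4 := phim_inj E3
    have hz0 : pim (N1 * (Mz c1 * N2)) = 0 := by
      rw [← E4, pim_smul_sqrtd hk0]
    have hMc1 : Mz c1 = N1i * (N1 * (Mz c1 * N2)) * N2i := by
      rw [← Matrix.mul_assoc N1i N1 (Mz c1 * N2), h12, Matrix.one_mul, Matrix.mul_assoc,
        h21, Matrix.mul_one]
    have : pim (Mz c1) = 0 := by
      rw [hMc1, pim_mul, pim_mul, hz0, Matrix.mul_zero, Matrix.zero_mul]
    exact pim_Mz_ne c1 hc1.1 this

end
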